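/- Fix ψ, β : ℝ and reals λ, ν, μ, η > 0. Let C = λ·R(ψ), D = ν·R(ψ + π/2), and S = μ·R(β) + η·R(β + π/2). Then the coupling coefficient of the carry-over information satisfies −2λν · u_ψᵀ (S + C + D)⁻¹ u_ψ⊥ = λν (η − μ) sin(2(ψ − β)) / det(S + C + D). -/

import Mathlib

/-!
Write `M = S + C + D` and `u = u_ψ`. In Lean `M⁻¹ = (det M)⁻¹ • adj M`, and in dimension two
the adjugate is conjugation of the transpose by the quarter-turn, so
`uᵀ (adj M) u⊥ = -uᵀ M u⊥`. The rank-one terms `C` and `D` contribute nothing to `uᵀ M u⊥`,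
while `S` contributes `(η - μ) cos(ψ - β) sin(ψ - β)`. (For singular `M` the junk value
`(det M)⁻¹ = 0` makes both sides `0`.)
-/

open Matrix Real

/-- The unit vector `u_φ = (cos φ, sin φ)ᵀ`. -/
noncomputable def uvec (φ : ℝ) : Fin 2 → ℝ := ![Real.cos φ, Real.sin φ]

/-- The orthogonal unit vector `u_φ⊥ = u_{φ+π/2}`. -/
noncomputable def uvecPerp (φ : ℝ) : Fin 2 → ℝ := uvec (φ + π / 2)

/-- The rank-one matrix `R(φ) = u_φ u_φᵀ`. -/
noncomputable def Rmat (φ : ℝ) : Matrix (Fin 2) (Fin 2) ℝ :=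
  Matrix.vecMulVec (uvec φ) (uvec φ)

lemma dotProduct_adjugate_mulVec_fin_two {R : Type*} [CommRing R] (A : Matrix (Fin 2) (Fin 2) R)
    (x : Fin 2 → R) :
    x ⬝ᵥ (A.adjugate *ᵥ ![-x 1, x 0]) = -(x ⬝ᵥ (A *ᵥ ![-x 1, x 0])) := by
  simp only [adjugate_fin_two, dotProduct, mulVec, Fin.sum_univ_two, of_apply, cons_val',
    cons_val_zero, cons_val_one, empty_val', cons_val_fin_one]
  ring

lemma uvecPerp_eq (φ : ℝ) : uvecPerp φ = ![-uvec φ 1, uvec φ 0] := by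
  simp [uvecPerp, uvec, cos_add_pi_div_two, sin_add_pi_div_two]

lemma uvec_dotProduct_uvec (a b : ℝ) : uvec a ⬝ᵥ uvec b = cos (a - b) := by
  simp [uvec, dotProduct, Fin.sum_univ_two, cos_sub]

lemma uvec_dotProduct_Rmat_mulVec (a φ b : ℝ) :
    uvec a ⬝ᵥ (Rmat φ *ᵥ uvec b) = cos (a - φ) * cos (φ - b) := by
  rw [Rmat, vecMulVec_mulVec, op_smul_eq_smul, dotProduct_smul, smul_eq_mul,
    uvec_dotProduct_uvec, uvec_dotProduct_uvec, mul_comm]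

lemma uvec_dotProduct_mulVec_uvecPerp (ψ β l ν μ η : ℝ) :
    uvec ψ ⬝ᵥ ((μ • Rmat β + η • Rmat (β + π / 2) + l • Rmat ψ + ν • Rmat (ψ + π / 2)) *ᵥ
        uvecPerp ψ) = (η - μ) * sin (2 * (ψ - β)) / 2 := by
  simp only [uvecPerp, add_mulVec, smul_mulVec, dotProduct_add, dotProduct_smul, smul_eq_mul,
    uvec_dotProduct_Rmat_mulVec]
  have h₁ : cos (β - (ψ + π / 2)) = -sin (ψ - β) := by
    rw [← cos_add_pi_div_two, ← cos_neg]; ring_nf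
  have h₂ : cos (ψ - (β + π / 2)) = sin (ψ - β) := by
    rw [sub_add_eq_sub_sub, cos_sub_pi_div_two]
  have h₃ : cos (β + π / 2 - (ψ + π / 2)) = cos (ψ - β) := by
    rw [← cos_neg]; ring_nf
  rw [h₁, h₂, h₃, sin_two_mul]
  simp only [sub_self, cos_zero, cos_pi_div_two, show ψ - (ψ + π / 2) = -(π / 2) by ring,
    cos_neg]
  ring

theorem carryover_coupling_coefficient_general (ψ β l ν μ η : ℝ)
    (C D S : Matrix (Fin 2) (Fin 2) ℝ)
    (hC : C = l • Rmat ψ) (hD : D = ν • Rmat (ψ + π / 2))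
    (hS : S = μ • Rmat β + η • Rmat (β + π / 2)) :
    -2 * l * ν * (uvec ψ ⬝ᵥ ((S + C + D)⁻¹ *ᵥ uvecPerp ψ)) =
      l * ν * (η - μ) * Real.sin (2 * (ψ - β)) / (S + C + D).det := by
  subst hC hD hS
  rw [inv_def, Ring.inverse_eq_inv', smul_mulVec, dotProduct_smul, smul_eq_mul, uvecPerp_eq,
    dotProduct_adjugate_mulVec_fin_two, ← uvecPerp_eq, uvec_dotProduct_mulVec_uvecPerp]
  ring

/-- **Coupling coefficient of the carry-over information (2-D case).** With
`C = λ·R(ψ)`, `D = ν·R(ψ+π/2)`, and `S = μ·R(β) + η·R(β+π/2)`,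
`−2λν · u_ψᵀ (S + C + D)⁻¹ u_ψ⊥ = λν (η − μ) sin(2(ψ − β)) / det(S + C + D)`. -/
theorem carryover_coupling_coefficient (ψ β l ν μ η : ℝ)
    (hl : 0 < l) (hν : 0 < ν) (hμ : 0 < μ) (hη : 0 < η)
    (C D S : Matrix (Fin 2) (Fin 2) ℝ)
    (hC : C = l • Rmat ψ) (hD : D = ν • Rmat (ψ + π / 2))
    (hS : S = μ • Rmat β + η • Rmat (β + π / 2)) :
    -2 * l * ν * (uvec ψ ⬝ᵥ ((S + C + D)⁻¹ *ᵥ uvecPerp ψ)) =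
      l * ν * (η - μ) * Real.sin (2 * (ψ - β)) / (S + C + D).det :=
  carryover_coupling_coefficient_general ψ β l ν μ η C D S hC hD hS
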